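/- arXiv:0705.1381 — 5 statements merged into one kernel-verified Lean document; each statement's English description precedes it below -/
import Mathlib

section
/- For every ε > 0 there exist infinitely many positive integers n that are not barriers for ε·ω. -/
/-- There are numbers with arbitrarily many distinct prime factors. -/
lemma exists_many_factors (k : ℕ) : ∃ P : ℕ, 0 < P ∧ k ≤ P.primeFactors.card := by
  induction k with
  | zero => exact ⟨1, one_pos, Nat.zero_le _⟩
  | succ k ih =>
    obtain ⟨P, hP, hk⟩ := ih
    obtain ⟨p, hpP, hp⟩ := Nat.exists_infinite_primes (P + 1)
    refine ⟨P * p, Nat.mul_pos hP hp.pos, ?_⟩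
    have hnot : p ∉ P.primeFactors := by
      intro h
      have := Nat.le_of_dvd hP (Nat.dvd_of_mem_primeFactors h)
      omega
    have : (P * p).primeFactors = insert p P.primeFactors := by
      rw [Nat.primeFactors_mul hP.ne' hp.pos.ne', Nat.Prime.primeFactors hp]
      ext q; simp [or_comm]
    rw [this, Finset.card_insert_of_notMem hnot]
    omega

/-- For every ε > 0 there are infinitely many positive integers that are not barriers
for ε·ω. -/
theorem stmt_3 (ε : ℝ) (hε : 0 < ε) :
    {n : ℕ | 0 < n ∧ ∃ m : ℕ, m < n ∧ (m : ℝ) + ε * (m.primeFactors.card : ℝ) > n}.Infinite := by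
  obtain ⟨k, hk⟩ := exists_nat_gt (1 / ε)
  obtain ⟨P, hP, hkP⟩ := exists_many_factors k
  have key : ∀ t : ℕ, 0 < t → 1 < ε * ((P * t).primeFactors.card : ℝ) := by
    intro t ht
    have hsub : P.primeFactors ⊆ (P * t).primeFactors :=
      Nat.primeFactors_mono (Dvd.intro t rfl) (Nat.mul_pos hP ht).ne'
    have hcard : (k : ℝ) ≤ ((P * t).primeFactors.card : ℝ) := by
      exact_mod_cast hkP.trans (Finset.card_le_card hsub)
    have h1 : 1 < ε * k := by
      rw [div_lt_iff₀ hε] at hk; nlinarith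
    calc (1:ℝ) < ε * k := h1
      _ ≤ ε * ((P * t).primeFactors.card : ℝ) := by
        apply mul_le_mul_of_nonneg_left hcard hε.le
  apply Set.infinite_of_injective_forall_mem (f := fun j : ℕ => P * (j + 1) + 1)
  case hi =>
    intro a b hab
    simp only [add_left_inj] at hab
    have := Nat.eq_of_mul_eq_mul_left hP hab
    omega
  case hf =>
    intro j
    refine ⟨by positivity, P * (j + 1), by omega, ?_⟩
    have := key (j + 1) (by omega)
    push_cast
    nlinarith
end

section
/- Let ε ∈ (0,1], let t be the greatest natural number with t·ε ≤ 1, and let r = t+1. For n ≤ p₁⋯p_r·p_{r+1} and any m ≤ n − r, one has m + ε·ω(m) ≤ n. Consequently n is a barrier for ε·ω if and only if m + ε·ω(m) ≤ n holds for all m ∈ {n−1, n−2, …, n−r+1}. -/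
/-!
A number `m` with `ω(m) > k` is divisible by `k + 1` distinct primes, so it is at least the
product `p₁⋯p_{k+1}` of the first `k + 1` primes. Hence every `m < n ≤ p₁⋯p_{r+1}` has
`ω(m) ≤ r`, and as `ε ≤ 1` the term `ε·ω(m)` is at most `r ≤ n - m` once `m ≤ n - r`.
-/

open Finset

namespace Nat

theorem prod_range_nth_le_prod {p : ℕ → Prop} (S : Finset ℕ) (hS : ∀ x ∈ S, p x) :
    ∏ i ∈ range #S, nth p i ≤ ∏ x ∈ S, x := by
  classical
  induction S using Finset.induction_on_max with
  | empty => simp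
  | insert a s hlt ih =>
    have ha : a ∉ s := fun h => (hlt a h).false
    have hcount : #s < count p (a + 1) := by
      rw [count_eq_card_filter_range, Nat.lt_iff_add_one_le, ← card_insert_of_notMem ha]
      refine card_le_card fun x hx => mem_filter.2 ⟨mem_range.2 ?_, hS x hx⟩
      rcases mem_insert.1 hx with rfl | hx
      · exact lt_add_one x
      · exact (hlt x hx).trans (lt_add_one a)
    rw [card_insert_of_notMem ha, prod_range_succ, prod_insert ha, mul_comm a]
    exact Nat.mul_le_mul (ih fun x hx => hS x (mem_insert_of_mem hx))
      (Nat.lt_succ_iff.1 (nth_lt_of_lt_count hcount))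

theorem prod_range_nth_prime_card_primeFactors_le {m : ℕ} (hm : m ≠ 0) :
    ∏ i ∈ range m.primeFactors.card, nth Nat.Prime i ≤ m :=
  (prod_range_nth_le_prod _ fun _ => prime_of_mem_primeFactors).trans
    (le_of_dvd (pos_of_ne_zero hm) (prod_primeFactors_dvd m))

theorem card_primeFactors_le_of_lt_prod_range_nth_prime {m k : ℕ} (hm : m ≠ 0)
    (h : m < ∏ i ∈ range (k + 1), nth Nat.Prime i) :
    m.primeFactors.card ≤ k := by
  by_contra! hk
  have hmono : ∏ i ∈ range (k + 1), nth Nat.Prime i ≤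
      ∏ i ∈ range m.primeFactors.card, nth Nat.Prime i :=
    prod_le_prod_of_subset_of_one_le' (range_subset_range.2 hk)
      fun i _ _ => (prime_nth_prime i).one_le
  exact (h.trans_le (hmono.trans (prod_range_nth_prime_card_primeFactors_le hm))).false

end Nat

theorem add_mul_card_primeFactors_le {ε : ℝ} (hε : ε ≤ 1) {r n m : ℕ} (hr : 0 < r)
    (hn : n ≤ ∏ i ∈ range (r + 1), Nat.nth Nat.Prime i) (hm : m ≤ n - r) :
    (m : ℝ) + ε * m.primeFactors.card ≤ n := by
  rcases eq_or_ne m 0 with rfl | hm0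
  · simp
  have hω : m.primeFactors.card ≤ r :=
    Nat.card_primeFactors_le_of_lt_prod_range_nth_prime hm0 (by omega)
  have hεω : ε * m.primeFactors.card ≤ r :=
    calc ε * m.primeFactors.card ≤ 1 * m.primeFactors.card := by gcongr
      _ ≤ r := by rw [one_mul]; exact_mod_cast hω
  have hmr : (m : ℝ) + r ≤ n := by exact_mod_cast (by omega : m + r ≤ n)
  linarith

theorem stmt_7_general (ε : ℝ) (hε1 : ε ≤ 1) (t : ℕ)
    (r : ℕ) (hr : r = t + 1) (n : ℕ)
    (hn : n ≤ ∏ i ∈ Finset.range (r + 1), Nat.nth Nat.Prime i) :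
    (∀ m : ℕ, m ≤ n - r → (m : ℝ) + ε * (m.primeFactors.card : ℝ) ≤ n) ∧
    ((∀ m : ℕ, m < n → (m : ℝ) + ε * (m.primeFactors.card : ℝ) ≤ n) ↔
      (∀ m : ℕ, n - r < m → m < n → (m : ℝ) + ε * (m.primeFactors.card : ℝ) ≤ n)) := by
  have low : ∀ m : ℕ, m ≤ n - r → (m : ℝ) + ε * (m.primeFactors.card : ℝ) ≤ n :=
    fun m hm => add_mul_card_primeFactors_le hε1 (by omega) hn hm
  refine ⟨low, fun h m _ hmn => h m hmn, fun h m hmn => ?_⟩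
  rcases le_or_gt m (n - r) with hle | hlt
  · exact low m hle
  · exact h m hlt hmn

/-- With t the greatest natural with t·ε ≤ 1 and r = t+1, for n ≤ p₁⋯p_r·p_{r+1} the
relation m + ε·ω(m) ≤ n holds for all m ≤ n − r, hence n is a barrier for ε·ω iff the
relation holds for all m with n − r < m < n. -/
theorem stmt_7 (ε : ℝ) (hε : 0 < ε) (hε1 : ε ≤ 1) (t : ℕ)
    (ht : (t : ℝ) * ε ≤ 1) (htmax : ∀ t' : ℕ, (t' : ℝ) * ε ≤ 1 → t' ≤ t)
    (r : ℕ) (hr : r = t + 1) (n : ℕ)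
    (hn : n ≤ ∏ i ∈ Finset.range (r + 1), Nat.nth Nat.Prime i) :
    (∀ m : ℕ, m ≤ n - r → (m : ℝ) + ε * (m.primeFactors.card : ℝ) ≤ n) ∧
    ((∀ m : ℕ, m < n → (m : ℝ) + ε * (m.primeFactors.card : ℝ) ≤ n) ↔
      (∀ m : ℕ, n - r < m → m < n → (m : ℝ) + ε * (m.primeFactors.card : ℝ) ≤ n)) :=
  stmt_7_general ε hε1 t r hr n hn
end

section
/- The number of barriers for ε·ω tends to infinity as ε → 0⁺: for every N there exists ε₀ > 0 such that for all 0 < ε < ε₀ there are at least N barriers for ε·ω. -/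
/-! Every `n ≤ 1/ε` is a barrier for `ε·ω`: for `m < n` we have `m + 1 ≤ n` and, since
`ω(m) ≤ m`, `ε·ω(m) ≤ ε·m < ε·n ≤ 1`. For `ε < 1/(N+1)` this already gives `N` barriers. -/

def IsBarrier (f : ℕ → ℝ) (n : ℕ) : Prop :=
  ∀ m : ℕ, m < n → (m : ℝ) + f m ≤ n

theorem Nat.card_primeFactors_le_self (m : ℕ) : m.primeFactors.card ≤ m := by
  simpa using Finset.card_le_card fun p hp =>
    Finset.mem_Icc.2 ⟨(Nat.prime_of_mem_primeFactors hp).one_le, Nat.le_of_mem_primeFactors hp⟩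

theorem isBarrier_mul_card_primeFactors {ε : ℝ} {n : ℕ} (hε : 0 ≤ ε) (hεn : ε * n ≤ 1) :
    IsBarrier (fun m => ε * m.primeFactors.card) n := by
  intro m hmn
  have hω : ε * m.primeFactors.card ≤ 1 :=
    calc ε * m.primeFactors.card ≤ ε * n := by
          gcongr
          exact_mod_cast (Nat.card_primeFactors_le_self m).trans hmn.le
      _ ≤ 1 := hεn
  have hm : (m : ℝ) + 1 ≤ n := by exact_mod_cast hmn
  linarith

/-- The number of barriers for ε·ω tends to infinity as ε → 0⁺. -/
theorem stmt_8 (N : ℕ) :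
    ∃ ε₀ : ℝ, 0 < ε₀ ∧ ∀ ε : ℝ, 0 < ε → ε < ε₀ →
      ∃ S : Finset ℕ, N ≤ S.card ∧
        ∀ n ∈ S, ∀ m : ℕ, m < n → (m : ℝ) + ε * (m.primeFactors.card : ℝ) ≤ n := by
  refine ⟨1 / (N + 1), by positivity, fun ε hε hεε₀ => ⟨Finset.range N, by simp, fun n hn => ?_⟩⟩
  have hnN : (n : ℝ) ≤ N + 1 := by exact_mod_cast (Finset.mem_range.1 hn).le.trans N.le_succ
  refine isBarrier_mul_card_primeFactors hε.le ?_
  calc ε * n ≤ ε * (N + 1) := by gcongr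
    _ ≤ 1 := ((lt_div_iff₀ (by positivity)).1 hεε₀).le
end

section
/- For ε ∈ (0,1] with t = ⌊1/ε⌋ ≥ 1, there are at least p₁·p₂⋯p_t·p_{t+1} barriers for ε·ω: every n with 1 ≤ n ≤ p₁⋯p_t·p_{t+1} is a barrier. -/
lemma primes_infinite' : {p : ℕ | p.Prime}.Infinite := Nat.infinite_setOf_prime

lemma prod_nth_prime_le_prod (S : Finset ℕ) (hS : ∀ p ∈ S, p.Prime) :
    ∏ i ∈ Finset.range S.card, Nat.nth Nat.Prime i ≤ ∏ p ∈ S, p := by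
  classical
  set k := S.card with hk
  let e := S.orderEmbOfFin hk.symm
  have hkey : ∀ i : Fin k, Nat.nth Nat.Prime i ≤ e i := by
    intro i
    have hcount : (i : ℕ) < Nat.count Nat.Prime (e i + 1) := by
      rw [Nat.count_eq_card_filter_range]
      have hsub : (Finset.Iic i).image (fun j => e j) ⊆
          (Finset.range (e i + 1)).filter Nat.Prime := by
        intro q hq
        simp only [Finset.mem_image, Finset.mem_Iic] at hq
        obtain ⟨j, hj, rfl⟩ := hq
        refine Finset.mem_filter.2 ⟨Finset.mem_range.2 ?_, hS _ (S.orderEmbOfFin_mem hk.symm j)⟩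
        exact Nat.lt_succ_of_le (e.monotone hj)
      calc (i : ℕ) < i + 1 := Nat.lt_succ_self _
        _ = (Finset.Iic i).card := (Fin.card_Iic i).symm
        _ = ((Finset.Iic i).image (fun j => e j)).card :=
            (Finset.card_image_of_injective _ e.injective).symm
        _ ≤ _ := Finset.card_le_card hsub
    have h5 := (Nat.lt_nth_iff_count_lt Nat.infinite_setOf_prime).1 hcount
    exact Nat.lt_succ_iff.mp h5
  calc ∏ i ∈ Finset.range k, Nat.nth Nat.Prime i
      = ∏ i : Fin k, Nat.nth Nat.Prime i := (Fin.prod_univ_eq_prod_range _ _).symm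
    _ ≤ ∏ i : Fin k, e i := Finset.prod_le_prod' fun i _ => hkey i
    _ = ∏ p ∈ S, p := by
        have himg : Finset.univ.image (fun i => e i) = S := by
          apply Finset.coe_injective
          rw [Finset.coe_image, Finset.coe_univ, Set.image_univ]
          exact S.range_orderEmbOfFin hk.symm
        rw [← himg, Finset.prod_image (fun a _ b _ h => e.injective h)]

/-- For ε ∈ (0,1] with t = ⌊1/ε⌋ ≥ 1, every n with 1 ≤ n ≤ p₁⋯p_t·p_{t+1} is a barrier
for ε·ω, so there are at least p₁⋯p_t·p_{t+1} barriers. -/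
theorem stmt_16 (ε : ℝ) (hε : 0 < ε) (hε1 : ε ≤ 1) (t : ℕ) (ht : t = ⌊1 / ε⌋₊)
    (ht1 : 1 ≤ t) (n : ℕ) (hn1 : 1 ≤ n)
    (hn : n ≤ ∏ i ∈ Finset.range (t + 1), Nat.nth Nat.Prime i) :
    ∀ m : ℕ, m < n → (m : ℝ) + ε * (m.primeFactors.card : ℝ) ≤ n := by
  intro m hm
  -- first: ω(m) ≤ t
  have hω : m.primeFactors.card ≤ t := by
    by_contra h
    push_neg at h
    have hm0 : m ≠ 0 := by
      rintro rfl
      simp at h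
    have h1 : ∏ i ∈ Finset.range m.primeFactors.card, Nat.nth Nat.Prime i ≤ m :=
      le_trans (prod_nth_prime_le_prod _ fun p hp => Nat.prime_of_mem_primeFactors hp)
        (Nat.le_of_dvd (Nat.pos_of_ne_zero hm0) (Nat.prod_primeFactors_dvd m))
    have h2 : ∏ i ∈ Finset.range (t + 1), Nat.nth Nat.Prime i ≤
        ∏ i ∈ Finset.range m.primeFactors.card, Nat.nth Nat.Prime i := by
      apply Finset.prod_le_prod_of_subset_of_one_le'
      · exact Finset.range_subset_range.2 h
      · intro i _ _
        exact (Nat.nth_mem_of_infinite Nat.infinite_setOf_prime i).one_lt.le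
    omega
  have htε : (t : ℝ) ≤ 1 / ε := by
    rw [ht]
    exact Nat.floor_le (by positivity)
  have h3 : ε * (m.primeFactors.card : ℝ) ≤ 1 := by
    calc ε * (m.primeFactors.card : ℝ) ≤ ε * t := by
          apply mul_le_mul_of_nonneg_left _ hε.le
          exact_mod_cast hω
      _ ≤ ε * (1 / ε) := mul_le_mul_of_nonneg_left htε hε.le
      _ = 1 := by field_simp
  have h4 : (m : ℝ) ≤ (n : ℝ) - 1 := by
    have : (m : ℝ) + 1 ≤ n := by exact_mod_cast hm
    linarith
  linarith
end

section
/- The proportion of integers n in the interval [p₁⋯p_r, p₁⋯p_r·p_{r+1}) with ω(n) ≤ t (for a fixed t) tends to 0 as r → ∞; i.e., lim_{r→∞} N_r(t) / (p₁⋯p_r·p_{r+1} − p₁⋯p_r) = 0, where N_r(t) is the count of such n. -/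
/-- The product of the first r primes. -/
noncomputable def primorialProd (r : ℕ) : ℕ := ∏ i ∈ Finset.range r, Nat.nth Nat.Prime i

/-- N_r(t): the number of n in [p₁⋯p_r, p₁⋯p_r·p_{r+1}) with 1 ≤ ω(n) ≤ t. -/
noncomputable def Nrt (r t : ℕ) : ℕ :=
  ((Finset.Ico (primorialProd r) (primorialProd r * Nat.nth Nat.Prime r)).filter
    (fun n => 1 ≤ n.primeFactors.card ∧ n.primeFactors.card ≤ t)).card

/-!
The map `n ↦ (⌊n / p₁⋯p_r⌋, n mod p₁, …, n mod p_r)` is injective, so `N_r(t)` is at most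
`(p_{r+1} - 1)` times the number of residue vectors modulo `p₁, …, p_r` with at most `t` zero
coordinates (each zero coordinate is a prime factor of `n`). Weighting a vector by `2^{-#zeros}`
bounds that number by `2^t ∏ (p_i - 1/2)`, so the proportion is at most `2^t ∏ (1 - 1/(2 p_i))`,
which tends to `0` because `∑ 1/p_i` diverges.
-/

open Finset Filter Function
open Nat (nth)

theorem Nat.modEq_prod_of_pairwise_coprime {ι : Type*} {s : Finset ι} {m : ι → ℕ} {a b : ℕ}
    (hm : (s : Set ι).Pairwise (Nat.Coprime on m)) (h : ∀ i ∈ s, a ≡ b [MOD m i]) :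
    a ≡ b [MOD ∏ i ∈ s, m i] := by
  rw [← prod_map_toList]
  refine (Nat.modEq_list_map_prod_iff ?_).mpr fun i hi => h i (mem_toList.mp hi)
  exact s.nodup_toList.pairwise_of_forall_ne fun i hi j hj hij =>
    hm (mem_toList.mp hi) (mem_toList.mp hj) hij

theorem tendsto_prod_range_one_sub_of_not_summable {a : ℕ → ℝ} (ha₀ : ∀ i, 0 ≤ a i)
    (ha₁ : ∀ i, a i ≤ 1) (ha : ¬Summable a) :
    Tendsto (fun r => ∏ i ∈ range r, (1 - a i)) atTop (nhds 0) := by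
  have hsum := (not_summable_iff_tendsto_nat_atTop_of_nonneg ha₀).mp ha
  refine squeeze_zero (fun r => prod_nonneg fun i _ => sub_nonneg.mpr (ha₁ i)) (fun r => ?_)
    (Real.tendsto_exp_atBot.comp (tendsto_neg_atTop_atBot.comp hsum))
  calc ∏ i ∈ range r, (1 - a i) ≤ ∏ i ∈ range r, Real.exp (-a i) :=
        prod_le_prod (fun i _ => sub_nonneg.mpr (ha₁ i)) fun i _ => Real.one_sub_le_exp_neg _
    _ = Real.exp (-∑ i ∈ range r, a i) := by rw [← Real.exp_sum, sum_neg_distrib]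

section FewZeros

variable {ι : Type*} [Fintype ι] [DecidableEq ι]

def residuesWithFewZeros (m : ι → ℕ) (t : ℕ) : Finset (ι → ℕ) :=
  {x ∈ Fintype.piFinset fun i => range (m i) | #{i | x i = 0} ≤ t}

lemma sum_range_ite_zero_half {m : ℕ} (hm : 0 < m) :
    ∑ a ∈ range m, (if a = 0 then (1 / 2 : ℝ) else 1) = m - 1 / 2 := by
  obtain ⟨k, rfl⟩ := Nat.exists_eq_add_of_lt hm
  simp only [sum_range_succ', Nat.add_eq_zero_iff, one_ne_zero, and_false, ↓reduceIte, sum_const,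
    card_range, nsmul_eq_mul, mul_one, Nat.cast_add, Nat.cast_one]
  ring

/-- Rankin's trick: a vector with at most `t` zeros has weight `2 ^ t * 2 ^ (-#zeros) ≥ 1`,
and the total weight factorises over the coordinates. -/
theorem card_residuesWithFewZeros_le (m : ι → ℕ) (hm : ∀ i, 0 < m i) (t : ℕ) :
    (#(residuesWithFewZeros m t) : ℝ) ≤ 2 ^ t * ∏ i, ((m i : ℝ) - 1 / 2) := by
  set w : ℕ → ℝ := fun a => if a = 0 then 1 / 2 else 1
  have hweight : ∀ x ∈ residuesWithFewZeros m t, (1 : ℝ) ≤ 2 ^ t * ∏ i, w (x i) := by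
    intro x hx
    have hzeros : #{i | x i = 0} ≤ t := (mem_filter.mp hx).2
    have : ∏ i, w (x i) = (1 / 2 : ℝ) ^ #{i | x i = 0} := by
      simp [w, prod_ite]
    rw [this]
    calc (1 : ℝ) = 2 ^ t * (1 / 2) ^ t := by rw [← mul_pow]; norm_num
      _ ≤ 2 ^ t * (1 / 2) ^ #{i | x i = 0} :=
        mul_le_mul_of_nonneg_left (pow_le_pow_of_le_one (by norm_num) (by norm_num) hzeros)
          (by positivity)
  calc (#(residuesWithFewZeros m t) : ℝ) = ∑ x ∈ residuesWithFewZeros m t, 1 := by simp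
    _ ≤ ∑ x ∈ residuesWithFewZeros m t, 2 ^ t * ∏ i, w (x i) := sum_le_sum hweight
    _ ≤ ∑ x ∈ Fintype.piFinset fun i => range (m i), 2 ^ t * ∏ i, w (x i) :=
        sum_le_sum_of_subset_of_nonneg (filter_subset _ _) fun x _ _ => by
          have : ∀ a, 0 ≤ w a := fun a => by simp only [w]; split_ifs <;> norm_num
          positivity
    _ = 2 ^ t * ∏ i, ((m i : ℝ) - 1 / 2) := by
        rw [← mul_sum, ← prod_univ_sum]
        simp only [w, sum_range_ite_zero_half (hm _)]

end FewZeros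

lemma nth_prime_injective : Injective (nth Nat.Prime) :=
  Nat.nth_injective Nat.infinite_setOfPred_prime

lemma coprime_nth_prime {i j : ℕ} (hij : i ≠ j) :
    Nat.Coprime (nth Nat.Prime i) (nth Nat.Prime j) :=
  (Nat.coprime_primes (Nat.prime_nth_prime i) (Nat.prime_nth_prime j)).mpr
    (nth_prime_injective.ne hij)

lemma not_summable_one_div_nth_prime : ¬Summable fun i => (1 : ℝ) / nth Nat.Prime i := by
  have hrange : Set.range (nth Nat.Prime) = {p | p.Prime} :=
    Nat.range_nth_of_infinite Nat.infinite_setOfPred_prime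
  have hvanish : ∀ n ∉ Set.range (nth Nat.Prime),
      {p | p.Prime}.indicator (fun n : ℕ => (1 : ℝ) / n) n = 0 :=
    fun n hn => Set.indicator_of_notMem (by rwa [hrange] at hn) _
  refine fun h => not_summable_one_div_on_primes <|
    (nth_prime_injective.summable_iff hvanish).mp (h.congr fun i => ?_)
  exact (Set.indicator_of_mem (Nat.prime_nth_prime i) fun n : ℕ => (1 : ℝ) / n).symm

lemma primorialProd_pos (r : ℕ) : 0 < primorialProd r :=
  prod_pos fun i _ => (Nat.prime_nth_prime i).pos

lemma injective_div_primorialProd_mod_nth_prime (r : ℕ) :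
    Injective fun n => (n / primorialProd r, fun i : Fin r => n % nth Nat.Prime i) := by
  intro n n' h
  simp only [Prod.mk.injEq, funext_iff] at h
  have hmod : n ≡ n' [MOD primorialProd r] :=
    Nat.modEq_prod_of_pairwise_coprime (fun i _ j _ hij => coprime_nth_prime hij)
      fun i hi => h.2 ⟨i, mem_range.mp hi⟩
  rw [← Nat.div_add_mod n (primorialProd r), ← Nat.div_add_mod n' (primorialProd r), h.1, hmod]

lemma card_nth_prime_dvd_le_card_primeFactors {n : ℕ} (hn : n ≠ 0) (r : ℕ) :
    #{i : Fin r | n % nth Nat.Prime i = 0} ≤ #n.primeFactors :=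
  card_le_card_of_injOn (fun i => nth Nat.Prime i)
    (fun i hi => Nat.mem_primeFactors.mpr
      ⟨Nat.prime_nth_prime i, Nat.dvd_of_mod_eq_zero (mem_filter.mp hi).2, hn⟩)
    fun _ _ _ _ hij => Fin.val_injective (nth_prime_injective hij)

theorem Nrt_le (r t : ℕ) :
    Nrt r t ≤
      (nth Nat.Prime r - 1) * #(residuesWithFewZeros (fun i : Fin r => nth Nat.Prime i) t) := by
  rw [← Nat.card_Ico 1, ← card_product]
  refine card_le_card_of_injOn _ (fun n hn => ?_)
    (injective_div_primorialProd_mod_nth_prime r).injOn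
  obtain ⟨⟨hlo, hhi⟩, -, hω⟩ : (primorialProd r ≤ n ∧ n < primorialProd r * nth Nat.Prime r) ∧
      1 ≤ #n.primeFactors ∧ #n.primeFactors ≤ t := by simpa [Nrt] using hn
  have hn0 : n ≠ 0 := (primorialProd_pos r).trans_le hlo |>.ne'
  simp only [coe_product, Set.mem_prod, mem_coe, mem_Ico, residuesWithFewZeros, mem_filter,
    Fintype.mem_piFinset, mem_range]
  exact ⟨⟨(Nat.one_le_div_iff (primorialProd_pos r)).mpr hlo, Nat.div_lt_of_lt_mul hhi⟩,
    fun i => Nat.mod_lt _ (Nat.prime_nth_prime i).pos,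
    (card_nth_prime_dvd_le_card_primeFactors hn0 r).trans hω⟩

lemma tendsto_prod_one_sub_inv_two_mul_nth_prime :
    Tendsto (fun r => ∏ i ∈ range r, (1 - 1 / (2 * (nth Nat.Prime i : ℝ)))) atTop (nhds 0) := by
  have hp : ∀ i, (2 : ℝ) ≤ nth Nat.Prime i := fun i => mod_cast (Nat.prime_nth_prime i).two_le
  refine tendsto_prod_range_one_sub_of_not_summable (fun i => by positivity)
    (fun i => ?_) fun h => not_summable_one_div_nth_prime ?_
  · rw [div_le_one (by linarith [hp i])]
    linarith [hp i]
  · exact (h.mul_left 2).congr fun i => by field_simp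

lemma prod_nth_prime_sub_half (r : ℕ) :
    ∏ i ∈ range r, ((nth Nat.Prime i : ℝ) - 1 / 2) =
      primorialProd r * ∏ i ∈ range r, (1 - 1 / (2 * (nth Nat.Prime i : ℝ))) := by
  rw [primorialProd, Nat.cast_prod, ← prod_mul_distrib]
  refine prod_congr rfl fun i _ => ?_
  have : (nth Nat.Prime i : ℝ) ≠ 0 := mod_cast (Nat.prime_nth_prime i).ne_zero
  field_simp

theorem Nrt_div_le (r t : ℕ) :
    (Nrt r t : ℝ) / ((primorialProd r * nth Nat.Prime r : ℕ) - (primorialProd r : ℕ) : ℝ) ≤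
      2 ^ t * ∏ i ∈ range r, (1 - 1 / (2 * (nth Nat.Prime i : ℝ))) := by
  have hp : (1 : ℝ) < nth Nat.Prime r := mod_cast (Nat.prime_nth_prime r).one_lt
  have hP : (0 : ℝ) < primorialProd r := mod_cast primorialProd_pos r
  have hcount : (Nrt r t : ℝ) ≤
      (nth Nat.Prime r - 1) * (2 ^ t * ∏ i ∈ range r, ((nth Nat.Prime i : ℝ) - 1 / 2)) := by
    have := card_residuesWithFewZeros_le (fun i : Fin r => nth Nat.Prime i)
      (fun i => (Nat.prime_nth_prime i).pos) t
    rw [Fin.prod_univ_eq_prod_range (fun i => (nth Nat.Prime i : ℝ) - 1 / 2)] at this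
    calc (Nrt r t : ℝ) ≤ ((nth Nat.Prime r - 1 : ℕ) : ℝ) *
          #(residuesWithFewZeros (fun i : Fin r => nth Nat.Prime i) t) := mod_cast Nrt_le r t
      _ ≤ _ := by
        rw [Nat.cast_sub (Nat.prime_nth_prime r).one_le, Nat.cast_one]
        gcongr
  have hden :
      (0 : ℝ) < ((primorialProd r * nth Nat.Prime r : ℕ) : ℝ) - (primorialProd r : ℕ) := by
    push_cast
    nlinarith
  rw [div_le_iff₀ hden]
  calc (Nrt r t : ℝ) ≤ _ := hcount
    _ = _ := by
      rw [prod_nth_prime_sub_half]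
      push_cast
      ring

theorem stmt_19_general (t : ℕ) :
    Filter.Tendsto
      (fun r : ℕ => (Nrt r t : ℝ) /
        ((primorialProd r * Nat.nth Nat.Prime r : ℕ) - (primorialProd r : ℕ) : ℝ))
      Filter.atTop (nhds 0) := by
  have hden : ∀ r,
      (0 : ℝ) ≤ ((primorialProd r * nth Nat.Prime r : ℕ) : ℝ) - (primorialProd r : ℕ) :=
    fun r => sub_nonneg.mpr <| mod_cast Nat.le_mul_of_pos_right _ (Nat.prime_nth_prime r).pos
  refine squeeze_zero (fun r => div_nonneg (Nat.cast_nonneg _) (hden r))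
    (fun r => Nrt_div_le r t) ?_
  simpa using tendsto_prod_one_sub_inv_two_mul_nth_prime.const_mul ((2 : ℝ) ^ t)

/-- For fixed t, N_r(t) / (p₁⋯p_r·p_{r+1} − p₁⋯p_r) → 0 as r → ∞. -/
theorem stmt_19 (t : ℕ) (ht : 0 < t) :
    Filter.Tendsto
      (fun r : ℕ => (Nrt r t : ℝ) /
        ((primorialProd r * Nat.nth Nat.Prime r : ℕ) - (primorialProd r : ℕ) : ℝ))
      Filter.atTop (nhds 0) :=
  stmt_19_general t
end
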